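/- arXiv:1012.4427 — 4 statements merged into one kernel-verified Lean document; each statement's English description precedes it below -/
import Mathlib

section
/- Let X and Y be finite-dimensional complex Hilbert spaces, |φ⟩ a unit vector in X, and ρ a density matrix on X ⊗ Y. Then the trace norm of ρ − |φ⟩⟨φ| ⊗ Tr_X(ρ) is at most 4·√(1 − ⟨φ|Tr_Y(ρ)|φ⟩). -/
open scoped ComplexOrder

open Matrix Finset in
open scoped MatrixOrder Matrix.Norms.L2Operator in
/-- The trace norm `Tr √(AᴴA)` of a complex square matrix. -/
noncomputable def traceNorm {n : Type*} [Fintype n] [DecidableEq n] (A : Matrix n n ℂ) : ℝ :=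
  ((CFC.sqrt (Aᴴ * A)).trace).re

/-!
Write `A = |φ⟩ ⊗ 1 : Y → X ⊗ Y`, so that `|φ⟩⟨φ| ⊗ ρ_Y = A ρ_Y Aᴴ`, `P = A Aᴴ` is a projection
and `ε = 1 - ⟨φ| Tr_Y ρ |φ⟩ = 1 - Tr (P ρ)`. Pick a contraction `W` with
`‖ρ - A ρ_Y Aᴴ‖₁ = Re Tr (W (ρ - A ρ_Y Aᴴ))` and put `V = W - 1 ⊗ Aᴴ W A`. Then
`Tr (W A ρ_Y Aᴴ) = Tr ((1 ⊗ Aᴴ W A) ρ)`, so the trace norm is `Re Tr (V ρ)`, while `‖V‖ ≤ 2` and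
`P V P = 0`. Splitting `ρ = √ρ √ρ` along `P` and `1 - P` and applying Cauchy–Schwarz for the
Hilbert–Schmidt inner product to the two surviving terms bounds `|Tr (V ρ)|` by `2 ‖V‖ √ε`.
-/

open Matrix
open scoped Kronecker

section PartialTrace

variable {X Y R : Type*}

/-- `Tr_X`: the first tensor factor is traced out. -/
def partialTraceFst [Fintype X] [AddCommMonoid R] (ρ : Matrix (X × Y) (X × Y) R) :
    Matrix Y Y R :=
  of fun j j' => ∑ i, ρ (i, j) (i, j')

/-- `Tr_Y`: the second tensor factor is traced out. -/
def partialTraceSnd [Fintype Y] [AddCommMonoid R] (ρ : Matrix (X × Y) (X × Y) R) :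
    Matrix X X R :=
  of fun i i' => ∑ j, ρ (i, j) (i', j)

lemma Matrix.IsHermitian.partialTraceFst [Fintype X] [AddCommMonoid R] [StarAddMonoid R]
    {ρ : Matrix (X × Y) (X × Y) R} (hρ : ρ.IsHermitian) : (partialTraceFst ρ).IsHermitian := by
  ext j j'
  simp only [conjTranspose_apply, _root_.partialTraceFst, of_apply, star_sum]
  exact Finset.sum_congr rfl fun i _ => hρ.apply _ _

variable [CommSemiring R]

/-- The isometry `|φ⟩ ⊗ 1 : Y → X ⊗ Y` (for a unit vector `φ`). -/
def kronVec (Y : Type*) [DecidableEq Y] (φ : X → R) : Matrix (X × Y) Y R :=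
  of fun p j => φ p.1 * (1 : Matrix Y Y R) p.2 j

@[simp]
lemma kronVec_apply [DecidableEq Y] (φ : X → R) (i : X) (j j' : Y) :
    kronVec Y φ (i, j) j' = φ i * (1 : Matrix Y Y R) j j' := rfl

lemma trace_one_kronecker_mul [Fintype X] [Fintype Y] [DecidableEq X] (N : Matrix Y Y R)
    (ρ : Matrix (X × Y) (X × Y) R) :
    (((1 : Matrix X X R) ⊗ₖ N) * ρ).trace = (N * partialTraceFst ρ).trace := by
  simp only [trace, diag_apply, mul_apply, kroneckerMap_apply, one_apply, ite_mul, one_mul,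
    zero_mul, Fintype.sum_prod_type, Finset.sum_ite_irrel, Finset.sum_const_zero,
    Finset.sum_ite_eq, Finset.mem_univ, if_true, partialTraceFst, of_apply, Finset.mul_sum]
  rw [Finset.sum_comm]
  exact Finset.sum_congr rfl fun _ _ => Finset.sum_comm

variable [Fintype Y] [DecidableEq Y]

lemma kronVec_mul_mul_conjTranspose [StarRing R] (φ : X → R) (N : Matrix Y Y R) :
    kronVec Y φ * N * (kronVec Y φ)ᴴ = vecMulVec φ (star φ) ⊗ₖ N := by
  ext ⟨i, j⟩ ⟨i', j'⟩
  simp [mul_apply, one_apply, vecMulVec_apply, apply_ite star, mul_ite, Finset.sum_ite_eq,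
    mul_right_comm]

variable [Fintype X]

lemma one_kronecker_mul_kronVec [DecidableEq X] (φ : X → R) (N : Matrix Y Y R) :
    ((1 : Matrix X X R) ⊗ₖ N) * kronVec Y φ = kronVec Y φ * N := by
  ext ⟨i, j⟩ j'
  simp [mul_apply, one_apply, Fintype.sum_prod_type, mul_comm]

variable [StarRing R]

lemma conjTranspose_kronVec_mul_kronVec (φ : X → R) :
    (kronVec Y φ)ᴴ * kronVec Y φ = (star φ ⬝ᵥ φ) • (1 : Matrix Y Y R) := by
  ext j j'
  rcases eq_or_ne j j' with rfl | h
  · simp [mul_apply, one_apply, Fintype.sum_prod_type, dotProduct]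
  · simp [mul_apply, one_apply, Fintype.sum_prod_type, h, h.symm]

lemma trace_conjTranspose_kronVec_mul_mul (φ : X → R) (ρ : Matrix (X × Y) (X × Y) R) :
    ((kronVec Y φ)ᴴ * ρ * kronVec Y φ).trace = star φ ⬝ᵥ (partialTraceSnd ρ *ᵥ φ) := by
  simp only [trace, diag_apply, mul_apply, conjTranspose_apply, Fintype.sum_prod_type,
    kronVec_apply, one_apply, mul_ite, mul_one, mul_zero, Finset.sum_ite_eq', Finset.mem_univ,
    if_true, dotProduct, Pi.star_apply, mulVec, partialTraceSnd, of_apply]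
  simp only [apply_ite star, star_zero, ite_mul, zero_mul, Finset.sum_ite_eq', Finset.mem_univ,
    if_true, Finset.mul_sum, Finset.sum_mul, mul_assoc]
  refine (Finset.sum_congr rfl fun _ _ => Finset.sum_comm).trans ?_
  rw [Finset.sum_comm]
  exact Finset.sum_congr rfl fun _ _ => Finset.sum_comm

end PartialTrace

section HilbertSchmidt

variable {n : Type*} [Fintype n] [DecidableEq n]

noncomputable def hsNorm (M : Matrix n n ℂ) : ℝ := √(M * Mᴴ).trace.re

lemma norm_trace_mul_conjTranspose_le (x y : Matrix n n ℂ) :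
    ‖(y * xᴴ).trace‖ ≤ hsNorm x * hsNorm y := by
  let _ := toMatrixSeminormedAddCommGroup (1 : Matrix n n ℂ) PosSemidef.one
  let _ := toMatrixInnerProductSpace (1 : Matrix n n ℂ) PosSemidef.one
  have h := norm_inner_le_norm (𝕜 := ℂ) x y
  rw [norm_eq_sqrt_re_inner (𝕜 := ℂ) x, norm_eq_sqrt_re_inner (𝕜 := ℂ) y] at h
  change ‖(y * 1 * xᴴ).trace‖ ≤ √(x * 1 * xᴴ).trace.re * √(y * 1 * yᴴ).trace.re at h
  simpa only [Matrix.mul_one, hsNorm] using h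

open scoped MatrixOrder Matrix.Norms.L2Operator

lemma hsNorm_mul_le (V M : Matrix n n ℂ) : hsNorm (V * M) ≤ ‖V‖ * hsNorm M := by
  have hle : star M * (star V * V) * M ≤ star M * algebraMap ℝ _ (‖V‖ ^ 2) * M :=
    star_left_conjugate_le_conjugate CStarAlgebra.star_mul_le_algebraMap_norm_sq M
  have h := (Complex.le_def.mp (Matrix.le_iff.mp hle).trace_nonneg).1
  rw [Algebra.algebraMap_eq_smul_one, Matrix.mul_smul, Matrix.mul_one, Matrix.smul_mul,
    trace_sub, trace_smul, Complex.sub_re, Complex.real_smul, Complex.re_ofReal_mul,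
    Complex.zero_re, sub_nonneg, star_eq_conjTranspose, star_eq_conjTranspose,
    trace_mul_comm Mᴴ M] at h
  have hVM : ((V * M) * (V * M)ᴴ).trace = (Mᴴ * (Vᴴ * V) * M).trace := by
    rw [conjTranspose_mul, ← trace_mul_comm]
    simp only [Matrix.mul_assoc]
  rw [hsNorm, hsNorm, hVM, ← Real.sqrt_sq (norm_nonneg V), ← Real.sqrt_mul (sq_nonneg _)]
  exact Real.sqrt_le_sqrt h

theorem norm_trace_mul_le_of_isHermitian_of_idempotent {V P ρ : Matrix n n ℂ}
    (hP : P.IsHermitian) (hPP : IsIdempotentElem P) (hPVP : P * V * P = 0) (hρ : ρ.PosSemidef)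
    (hρ1 : ρ.trace = 1) :
    ‖(V * ρ).trace‖ ≤ 2 * ‖V‖ * √(1 - (P * ρ).trace.re) := by
  obtain ⟨R, hRH, hRR⟩ : ∃ R : Matrix n n ℂ, Rᴴ = R ∧ R * R = ρ :=
    ⟨CFC.sqrt ρ, (CFC.sqrt_nonneg ρ).posSemidef.1, CFC.sqrt_mul_sqrt_self ρ hρ.nonneg⟩
  set Q := 1 - P with hQ
  have hQH : Qᴴ = Q := by rw [hQ, conjTranspose_sub, conjTranspose_one, hP.eq]
  have hQQ : Q * Q = Q := hPP.one_sub
  set ε := 1 - (P * ρ).trace.re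
  have hsplit : (V * ρ).trace = ((V * Q * R) * Rᴴ).trace + ((V * P * R) * (Q * R)ᴴ).trace := by
    have hPρP : (V * P * ρ * P).trace = 0 := by
      rw [trace_mul_comm, ← Matrix.mul_assoc, ← Matrix.mul_assoc, hPVP, Matrix.zero_mul,
        trace_zero]
    rw [conjTranspose_mul, hRH, hQH, ← trace_add, ← sub_zero (V * ρ).trace, ← hPρP, ← trace_sub]
    congr 1
    rw [hQ, ← hRR]; noncomm_ring
  have hproj : ∀ S : Matrix n n ℂ, Sᴴ = S → S * S = S →
      ((S * R) * (S * R)ᴴ).trace = (S * ρ).trace := by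
    intro S hSH hSS
    rw [conjTranspose_mul, hRH, hSH, ← Matrix.mul_assoc, trace_mul_comm, ← hRR]
    simp only [← Matrix.mul_assoc, hSS]
  have hQR : ((Q * R) * (Q * R)ᴴ).trace.re = ε := by
    rw [hproj Q hQH hQQ, hQ, Matrix.sub_mul, Matrix.one_mul, trace_sub, hρ1, Complex.sub_re,
      Complex.one_re]
  have hε : 0 ≤ ε :=
    hQR ▸ (Complex.le_def.mp (posSemidef_self_mul_conjTranspose _).trace_nonneg).1
  have hR : hsNorm R = 1 := by rw [hsNorm, hRH, hRR, hρ1, Complex.one_re, Real.sqrt_one]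
  have hPR : hsNorm (P * R) ≤ 1 := by
    rw [hsNorm, hproj P hP.eq hPP, Real.sqrt_le_one]
    linarith
  calc ‖(V * ρ).trace‖
      ≤ hsNorm R * hsNorm (V * (Q * R)) + hsNorm (Q * R) * hsNorm (V * (P * R)) := by
        rw [hsplit, Matrix.mul_assoc V Q, Matrix.mul_assoc V P]
        exact (norm_add_le _ _).trans (add_le_add (norm_trace_mul_conjTranspose_le _ _)
          (norm_trace_mul_conjTranspose_le _ _))
    _ ≤ 1 * (‖V‖ * √ε) + √ε * (‖V‖ * 1) := by
        rw [hR, ← hQR, ← hsNorm, one_mul, one_mul]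
        exact add_le_add (hsNorm_mul_le V _) (mul_le_mul_of_nonneg_left
          ((hsNorm_mul_le V _).trans (by gcongr)) (Real.sqrt_nonneg _))
    _ = 2 * ‖V‖ * √ε := by ring

end HilbertSchmidt

section OperatorNorm

open scoped MatrixOrder Matrix.Norms.L2Operator

lemma exists_norm_le_one_traceNorm_eq {n : Type*} [Fintype n] [DecidableEq n]
    {Δ : Matrix n n ℂ} (hΔ : Δ.IsHermitian) :
    ∃ W : Matrix n n ℂ, ‖W‖ ≤ 1 ∧ traceNorm Δ = (W * Δ).trace.re := by
  have hΔ' : IsSelfAdjoint Δ := hΔ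
  let s : ℝ → ℝ := fun x => if 0 ≤ x then 1 else -1
  have hs : ContinuousOn s (spectrum ℝ Δ) := Δ.finite_real_spectrum.continuousOn _
  refine ⟨cfc s Δ, norm_cfc_le zero_le_one fun x _ => ?_, ?_⟩
  · by_cases hx : 0 ≤ x <;> simp [s, hx]
  · have habs : (fun x : ℝ => ‖x‖) = fun x => s x * x := by
      ext x; by_cases hx : 0 ≤ x
      · simp [s, hx, abs_of_nonneg hx]
      · simp [s, hx, abs_of_neg (not_le.mp hx)]
    rw [traceNorm, ← Matrix.star_eq_conjTranspose, ← CFC.abs, CFC.abs_eq_cfc_norm Δ, habs,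
      cfc_mul s (fun x => x) Δ, cfc_id' ℝ Δ]

lemma norm_conjTranspose_mul_mul_le {m n : Type*} [Fintype m] [Fintype n] [DecidableEq m]
    [DecidableEq n] {A : Matrix m n ℂ} (hA : Aᴴ * A = 1) (W : Matrix m m ℂ) :
    ‖Aᴴ * W * A‖ ≤ ‖W‖ := by
  have hA1 : ‖A‖ ≤ 1 := by
    have h : ‖A‖ * ‖A‖ ≤ 1 := by
      rw [← l2_opNorm_conjTranspose_mul_self, hA]
      rcases subsingleton_or_nontrivial (Matrix n n ℂ) with h | h
      · simp [Subsingleton.elim (1 : Matrix n n ℂ) 0]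
      · exact CStarRing.norm_one.le
    nlinarith [norm_nonneg A]
  calc ‖Aᴴ * W * A‖ ≤ ‖Aᴴ‖ * ‖W‖ * ‖A‖ :=
        (l2_opNorm_mul _ _).trans (by gcongr; exact l2_opNorm_mul _ _)
    _ ≤ 1 * ‖W‖ * 1 := by rw [l2_opNorm_conjTranspose]; gcongr
    _ = ‖W‖ := by ring

lemma norm_one_kronecker_le {X Y : Type*} [Fintype X] [Fintype Y] [DecidableEq X]
    [DecidableEq Y] (N : Matrix Y Y ℂ) : ‖(1 : Matrix X X ℂ) ⊗ₖ N‖ ≤ ‖N‖ := by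
  set T := (1 : Matrix X X ℂ) ⊗ₖ N
  have hT : star T * T ≤ algebraMap ℝ _ (‖N‖ ^ 2) := by
    have hN := Matrix.le_iff.mp (CStarAlgebra.star_mul_le_algebraMap_norm_sq (a := N))
    refine Matrix.le_iff.mpr ?_
    convert (PosSemidef.one (n := X) (R := ℂ)).kronecker hN using 1
    simp only [T, Algebra.algebraMap_eq_smul_one, star_eq_conjTranspose, conjTranspose_kronecker,
      conjTranspose_one, ← mul_kronecker_mul, Matrix.mul_one]
    rw [sub_eq_iff_eq_add, ← kronecker_add, sub_add_cancel, kronecker_smul, one_kronecker_one]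
  have h := (CStarAlgebra.norm_le_iff_le_algebraMap _ (sq_nonneg _) (star_mul_self_nonneg T)).mpr hT
  rw [CStarRing.norm_star_mul_self, ← sq] at h
  exact (pow_le_pow_iff_left₀ (norm_nonneg _) (norm_nonneg _) two_ne_zero).mp h

theorem traceNorm_sub_mul_partialTraceFst_mul_le {X Y : Type*} [Fintype X] [Fintype Y]
    [DecidableEq X] [DecidableEq Y] {A : Matrix (X × Y) Y ℂ} (hA : Aᴴ * A = 1)
    (hAcomm : ∀ N : Matrix Y Y ℂ, ((1 : Matrix X X ℂ) ⊗ₖ N) * A = A * N)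
    {ρ : Matrix (X × Y) (X × Y) ℂ} (hρ : ρ.PosSemidef) (hρ1 : ρ.trace = 1) :
    traceNorm (ρ - A * partialTraceFst ρ * Aᴴ) ≤ 4 * √(1 - (A * Aᴴ * ρ).trace.re) := by
  obtain ⟨W, hW, hWΔ⟩ := exists_norm_le_one_traceNorm_eq <|
    hρ.isHermitian.sub (isHermitian_mul_mul_conjTranspose A hρ.isHermitian.partialTraceFst)
  set V := W - (1 : Matrix X X ℂ) ⊗ₖ (Aᴴ * W * A)
  have hV : ‖V‖ ≤ 2 := by
    have hW' := norm_conjTranspose_mul_mul_le hA W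
    have hT := norm_one_kronecker_le (X := X) (Aᴴ * W * A)
    linarith [norm_sub_le W ((1 : Matrix X X ℂ) ⊗ₖ (Aᴴ * W * A))]
  have hPVP : A * Aᴴ * V * (A * Aᴴ) = 0 := by
    have h : Aᴴ * V * A = 0 :=
      calc Aᴴ * V * A = Aᴴ * W * A - Aᴴ * (((1 : Matrix X X ℂ) ⊗ₖ (Aᴴ * W * A)) * A) := by
            rw [Matrix.mul_sub, Matrix.sub_mul, Matrix.mul_assoc Aᴴ (_ ⊗ₖ _)]
        _ = 0 := by rw [hAcomm, ← Matrix.mul_assoc Aᴴ A, hA, Matrix.one_mul, sub_self]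
    calc A * Aᴴ * V * (A * Aᴴ) = A * (Aᴴ * V * A) * Aᴴ := by simp only [Matrix.mul_assoc]
      _ = 0 := by rw [h, Matrix.mul_zero, Matrix.zero_mul]
  have hWV : (W * (ρ - A * partialTraceFst ρ * Aᴴ)).trace = (V * ρ).trace := by
    rw [Matrix.mul_sub, trace_sub, Matrix.sub_mul, trace_sub, trace_one_kronecker_mul,
      ← Matrix.mul_assoc, Matrix.mul_assoc _ A, trace_mul_comm _ Aᴴ, ← Matrix.mul_assoc,
      ← Matrix.mul_assoc]
  have hP : (A * Aᴴ).IsHermitian := by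
    simpa using isHermitian_mul_mul_conjTranspose A (isHermitian_one (n := Y) (α := ℂ))
  have hPP : IsIdempotentElem (A * Aᴴ) := by
    rw [IsIdempotentElem]
    rw [Matrix.mul_assoc, ← Matrix.mul_assoc Aᴴ, hA, Matrix.one_mul]
  calc traceNorm (ρ - A * partialTraceFst ρ * Aᴴ) ≤ ‖(V * ρ).trace‖ := by
        rw [hWΔ, hWV]; exact Complex.re_le_norm _
    _ ≤ 2 * ‖V‖ * √(1 - (A * Aᴴ * ρ).trace.re) :=
        norm_trace_mul_le_of_isHermitian_of_idempotent hP hPP hPVP hρ hρ1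
    _ ≤ 4 * √(1 - (A * Aᴴ * ρ).trace.re) :=
        mul_le_mul_of_nonneg_right (by linarith) (Real.sqrt_nonneg _)

end OperatorNorm

open Matrix Finset Kronecker in
/-- Lemma 3.2: for a unit vector `φ` on `X` and a density matrix `ρ` on `X ⊗ Y`,
`‖ρ − |φ⟩⟨φ| ⊗ Tr_X ρ‖₁ ≤ 4 √(1 − ⟨φ| Tr_Y ρ |φ⟩)`. -/
theorem stmt0 {X Y : Type*} [Fintype X] [DecidableEq X] [Fintype Y] [DecidableEq Y]
    (φ : X → ℂ) (hφ : ∑ i, ‖φ i‖ ^ 2 = 1)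
    (ρ : Matrix (X × Y) (X × Y) ℂ) (hρ : ρ.PosSemidef) (hρ1 : ρ.trace = 1)
    -- partial trace of ρ over X
    (ρY : Matrix Y Y ℂ) (hρY : ∀ j j', ρY j j' = ∑ i, ρ (i, j) (i, j'))
    -- partial trace of ρ over Y
    (ρX : Matrix X X ℂ) (hρX : ∀ i i', ρX i i' = ∑ j, ρ (i, j) (i', j)) :
    traceNorm (ρ - (Matrix.vecMulVec φ (star φ)) ⊗ₖ ρY)
      ≤ 4 * Real.sqrt (1 - (star φ ⬝ᵥ (ρX *ᵥ φ)).re) := by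
  obtain rfl : ρY = partialTraceFst ρ := Matrix.ext hρY
  obtain rfl : ρX = partialTraceSnd ρ := Matrix.ext hρX
  have hφ1 : star φ ⬝ᵥ φ = 1 := by
    have h := congrArg ((↑) : ℝ → ℂ) hφ
    push_cast at h
    simpa only [dotProduct, Pi.star_apply, Complex.star_def, Complex.conj_mul'] using h
  have hA : (kronVec Y φ)ᴴ * kronVec Y φ = 1 := by
    rw [conjTranspose_kronVec_mul_kronVec, hφ1, one_smul]
  rw [← kronVec_mul_mul_conjTranspose, ← trace_conjTranspose_kronVec_mul_mul,
    trace_mul_comm _ (kronVec Y φ), ← Matrix.mul_assoc]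
  exact traceNorm_sub_mul_partialTraceFst_mul_le hA (one_kronecker_mul_kronVec φ) hρ hρ1
end

section
/- Consider a Boolean circuit with gates g₀,…,g_{N−1} (each gate a constant ZERO/ONE, a NOT gate, or an AND/OR gate with inputs from strictly smaller indices), with correct values v₀,…,v_{N−1} ∈ {0,1}. Suppose a no-signaling strategy in the two-prover protocol (verifier sends uniform s to Alice and uniform t to Bob; Alice answers the input values of g_s, Bob answers the value of g_t; verifier checks consistency tests (a) and (b)) is rejected with probability ε < 1/(N²·3^N). Let δ(i) be the probability Bob answers 1 − v_i on question i. Then for every i, δ(i) < 3^i/3^N. -/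
/-- Kinds of gates in a Boolean circuit with `N` gates. -/
inductive Gate (N : ℕ) where
  | zero : Gate N
  | one : Gate N
  | not (j : Fin N) : Gate N
  | and (j₁ j₂ : Fin N) : Gate N
  | or (j₁ j₂ : Fin N) : Gate N

/-- The Boolean function computed by a gate from the (claimed) values of its inputs. -/
def gateFun {N : ℕ} : Gate N → Bool × Bool → Bool
  | .zero, _ => false
  | .one, _ => true
  | .not _, y => !y.1
  | .and _ _, y => y.1 && y.2
  | .or _ _, y => y.1 || y.2

/-- Inputs of each gate come from strictly smaller indices. -/
def gateOK {N : ℕ} (C : Fin N → Gate N) : Prop :=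
  ∀ i : Fin N, match C i with
    | .zero => True
    | .one => True
    | .not j => j < i
    | .and j₁ j₂ => j₁ < i ∧ j₂ < i
    | .or j₁ j₂ => j₁ < i ∧ j₂ < i

/-- `v` assigns to each gate its correct value. -/
def correctValues {N : ℕ} (C : Fin N → Gate N) (v : Fin N → Bool) : Prop :=
  ∀ i : Fin N, v i = match C i with
    | .zero => false
    | .one => true
    | .not j => !v j
    | .and j₁ j₂ => v j₁ && v j₂
    | .or j₁ j₂ => v j₁ || v j₂

/-- Test (b): if `g_t` is an input of `g_s`, Alice's claimed value of `g_t`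
(among her answers for the inputs of `g_s`) must agree with Bob's answer. -/
def agreeTest {N : ℕ} (g : Gate N) (t : Fin N) (y : Bool × Bool) (z : Bool) : Bool :=
  match g with
  | .zero => true
  | .one => true
  | .not j => if t = j then y.1 == z else true
  | .and j₁ j₂ =>
      (if t = j₁ then y.1 == z else true) && (if t = j₂ then y.2 == z else true)
  | .or j₁ j₂ =>
      (if t = j₁ then y.1 == z else true) && (if t = j₂ then y.2 == z else true)

/-- The verifier's acceptance predicate (tests (a) and (b)): Alice is asked `s` and
answers the input values `y` of gate `g_s`; Bob is asked `t` and answers `z`. -/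
def accept {N : ℕ} (C : Fin N → Gate N) (s t : Fin N) (y : Bool × Bool) (z : Bool) : Bool :=
  (if s = t then gateFun (C s) y == z else true) && agreeTest (C s) t y z

/-- Probability of an event under question pair `(s,t)`. -/
def prEv {N : ℕ} (p : Fin N → Fin N → (Bool × Bool) → Bool → ℝ) (s t : Fin N)
    (E : (Bool × Bool) → Bool → Bool) : ℝ :=
  ∑ y, ∑ z, if E y z then p s t y z else 0

theorem prEv_nonneg {N : ℕ} {p : Fin N → Fin N → (Bool × Bool) → Bool → ℝ}
    (hp0 : ∀ s t y z, 0 ≤ p s t y z) (s t : Fin N) (E : (Bool × Bool) → Bool → Bool) :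
    0 ≤ prEv p s t E := by
  apply Finset.sum_nonneg; intro y _
  apply Finset.sum_nonneg; intro z _
  split
  · exact hp0 s t y z
  · exact le_rfl

theorem prEv_mono {N : ℕ} {p : Fin N → Fin N → (Bool × Bool) → Bool → ℝ}
    (hp0 : ∀ s t y z, 0 ≤ p s t y z) (s t : Fin N) {E F : (Bool × Bool) → Bool → Bool}
    (h : ∀ y z, E y z = true → F y z = true) :
    prEv p s t E ≤ prEv p s t F := by
  apply Finset.sum_le_sum; intro y _
  apply Finset.sum_le_sum; intro z _
  by_cases hE : E y z = true
  · rw [if_pos hE, if_pos (h y z hE)]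
  · rw [if_neg hE]
    split
    · exact hp0 s t y z
    · exact le_rfl

theorem prEv_union {N : ℕ} {p : Fin N → Fin N → (Bool × Bool) → Bool → ℝ}
    (hp0 : ∀ s t y z, 0 ≤ p s t y z) (s t : Fin N) (E F : (Bool × Bool) → Bool → Bool) :
    prEv p s t (fun y z => E y z || F y z) ≤ prEv p s t E + prEv p s t F := by
  unfold prEv
  rw [← Finset.sum_add_distrib]
  apply Finset.sum_le_sum; intro y _
  rw [← Finset.sum_add_distrib]
  apply Finset.sum_le_sum; intro z _
  cases hE : E y z <;> cases hF : F y z <;>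
    simp [hE, hF, hp0 s t y z]

theorem prEv_left {N : ℕ} {p : Fin N → Fin N → (Bool × Bool) → Bool → ℝ}
    (hnsB : ∀ s t t' y, ∑ z, p s t y z = ∑ z, p s t' y z)
    (s t t' : Fin N) (E : (Bool × Bool) → Bool) :
    prEv p s t (fun y _ => E y) = prEv p s t' (fun y _ => E y) := by
  unfold prEv
  refine Finset.sum_congr rfl fun y _ => ?_
  by_cases h : E y = true
  · simp only [h, if_true]
    exact hnsB s t t' y
  · simp [h]

theorem prEv_right {N : ℕ} {p : Fin N → Fin N → (Bool × Bool) → Bool → ℝ}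
    (hnsA : ∀ s s' t z, ∑ y, p s t y z = ∑ y, p s' t y z)
    (s s' t : Fin N) (E : Bool → Bool) :
    prEv p s t (fun _ z => E z) = prEv p s' t (fun _ z => E z) := by
  have key : ∀ (u : Fin N), prEv p u t (fun _ z => E z)
      = ∑ z, if E z = true then ∑ y, p u t y z else 0 := by
    intro u
    unfold prEv
    rw [Finset.sum_comm]
    refine Finset.sum_congr rfl fun z _ => ?_
    by_cases h : E z = true <;> simp [h]
  rw [key s, key s']
  refine Finset.sum_congr rfl fun z _ => ?_
  by_cases h : E z = true <;> simp [h, hnsA s s' t z]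


open Finset in
/-- Soundness of the no-signaling two-prover protocol for circuit evaluation:
if a no-signaling strategy is rejected with probability `ε < 1/(N²·3^N)`, then the
probability `δ(i)` that Bob answers the wrong value `1 − v_i` on question `i`
satisfies `δ(i) < 3^i/3^N` for every gate `i`. -/
theorem stmt8 {N : ℕ} (C : Fin N → Gate N) (hC : gateOK C)
    (v : Fin N → Bool) (hv : correctValues C v)
    (p : Fin N → Fin N → (Bool × Bool) → Bool → ℝ)
    (hp0 : ∀ s t y z, 0 ≤ p s t y z)
    (hp1 : ∀ s t, ∑ y, ∑ z, p s t y z = 1)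
    (hnsA : ∀ s s' t z, ∑ y, p s t y z = ∑ y, p s' t y z)
    (hnsB : ∀ s t t' y, ∑ z, p s t y z = ∑ z, p s t' y z)
    (rej : Fin N → Fin N → ℝ)
    (hrej : ∀ s t, rej s t = ∑ y, ∑ z, (if accept C s t y z then 0 else p s t y z))
    (ε : ℝ) (hε : ε = (1 / (N : ℝ) ^ 2) * ∑ s, ∑ t, rej s t)
    (hsmall : ε < 1 / ((N : ℝ) ^ 2 * 3 ^ N))
    (δ : Fin N → ℝ)
    (hδ : ∀ i, δ i = ∑ y, ∑ z, (if z = v i then 0 else p i i y z)) :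
    ∀ i : Fin N, δ i < (3 : ℝ) ^ (i : ℕ) / 3 ^ N := by
  -- global facts
  have hrejnn : ∀ s t, 0 ≤ rej s t := by
    intro s t; rw [hrej]
    apply Finset.sum_nonneg; intro y _
    apply Finset.sum_nonneg; intro z _
    split
    · exact le_rfl
    · exact hp0 s t y z
  have hrejP : ∀ s t, rej s t = prEv p s t (fun y z => !accept C s t y z) := by
    intro s t; rw [hrej]; unfold prEv
    refine Finset.sum_congr rfl fun y _ => Finset.sum_congr rfl fun z _ => ?_
    cases h : accept C s t y z <;> simp [h]
  have hδP : ∀ t, δ t = prEv p t t (fun _ z => z != v t) := by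
    intro t; rw [hδ]; unfold prEv
    refine Finset.sum_congr rfl fun y _ => Finset.sum_congr rfl fun z _ => ?_
    by_cases h : z = v t <;> simp [h]
  have hpowmono : ∀ m n : ℕ, m ≤ n → (3:ℝ)^m ≤ 3^n := fun m n h =>
    pow_le_pow_right₀ (by norm_num) h
  suffices H : ∀ n : ℕ, ∀ i : Fin N, (i : ℕ) < n → δ i < (3:ℝ)^(i:ℕ)/3^N by
    intro i; exact H ((i:ℕ)+1) i (by omega)
  intro n
  induction n with
  | zero => intro i h; omega
  | succ n IHn =>
  intro i hi
  have IH : ∀ j : Fin N, j < i → δ j < (3:ℝ)^(j:ℕ)/3^N := by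
    intro j hj
    exact IHn j (by have := Fin.lt_def.mp hj; omega)
  have hN : 0 < N := i.pos
  have hNR : (0:ℝ) < (N:ℝ)^2 := by
    have : (0:ℝ) < (N:ℝ) := by exact_mod_cast hN
    positivity
  have hD : (0:ℝ) < 3 ^ N := by positivity
  have htot : ∑ s, ∑ t, rej s t = (N:ℝ)^2 * ε := by
    rw [hε]
    field_simp
  have hrow : ∑ t, rej i t ≤ (N:ℝ)^2 * ε := by
    rw [← htot]
    exact Finset.single_le_sum
      (fun s' _ => Finset.sum_nonneg fun t _ => hrejnn s' t) (Finset.mem_univ i)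
  have hsub : ∀ S : Finset (Fin N), ∑ t ∈ S, rej i t ≤ (N:ℝ)^2 * ε :=
    fun S => le_trans
      (Finset.sum_le_sum_of_subset_of_nonneg (Finset.subset_univ S)
        (fun t _ _ => hrejnn i t)) hrow
  have hNε : (N:ℝ)^2 * ε < 1 / 3 ^ N := by
    have h1 := mul_lt_mul_of_pos_left hsmall hNR
    have h2 : (N:ℝ)^2 * (1 / ((N:ℝ)^2 * 3^N)) = 1 / 3^N := by
      field_simp
    linarith
  -- step 1: test (a)
  have step1 : δ i ≤ rej i i + prEv p i i (fun y _ => gateFun (C i) y != v i) := by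
    have h1 : prEv p i i (fun _ z => z != v i)
        ≤ prEv p i i (fun y z => (!accept C i i y z) || (gateFun (C i) y != v i)) := by
      apply prEv_mono hp0
      intro y z hz
      cases ha : accept C i i y z
      · simp
      · have hg : gateFun (C i) y = z := by
          simp only [accept, Bool.and_eq_true] at ha
          simpa using ha.1
        simp [hg, hz]
    have h2 := prEv_union hp0 i i (fun y z => !accept C i i y z)
      (fun y _ => gateFun (C i) y != v i)
    rw [hδP i, hrejP i i]
    linarith
  -- key: test (b)
  have key : ∀ (t : Fin N) (E : Bool × Bool → Bool),
      (∀ y z, accept C i t y z = true → E y = true → (z != v t) = true) →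
      prEv p i i (fun y _ => E y) ≤ rej i t + δ t := by
    intro t E hE
    have h1 : prEv p i i (fun y _ => E y) = prEv p i t (fun y _ => E y) :=
      prEv_left hnsB i i t E
    have h2 : prEv p i t (fun y _ => E y)
        ≤ prEv p i t (fun y z => (!accept C i t y z) || (z != v t)) := by
      apply prEv_mono hp0
      intro y z hy
      cases ha : accept C i t y z
      · simp
      · simp [hE y z ha hy]
    have h3 := prEv_union hp0 i t (fun y z => !accept C i t y z) (fun _ z => z != v t)
    have h4 : prEv p i t (fun _ z => z != v t) = δ t := by
      rw [hδP t]; exact prEv_right hnsA i t t _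
    have h5 := hrejP i t
    linarith
  have hone3 : (1:ℝ)/3^N ≤ (3:ℝ)^(i:ℕ)/3^N := by
    gcongr
    have := hpowmono 0 (i:ℕ) (Nat.zero_le _)
    simpa using this
  have hreji : rej i i ≤ (N:ℝ)^2 * ε := by
    have := hsub {i}
    simpa using this
  rcases hgi : C i with _ | _ | j | ⟨j₁, j₂⟩ | ⟨j₁, j₂⟩
  -- zero
  · have hvi : v i = false := by have h := hv i; rw [hgi] at h; exact h
    have hzero : prEv p i i (fun y (_ : Bool) => gateFun (C i) y != v i) = 0 := by
      have he : (fun (y : Bool × Bool) (_ : Bool) => gateFun (C i) y != v i)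
          = fun _ _ => false := by
        funext y z; rw [hgi, hvi]; rfl
      rw [he]; simp [prEv]
    rw [hgi] at step1
    rw [hgi] at hzero
    linarith
  -- one
  · have hvi : v i = true := by have h := hv i; rw [hgi] at h; exact h
    have hzero : prEv p i i (fun y (_ : Bool) => gateFun (C i) y != v i) = 0 := by
      have he : (fun (y : Bool × Bool) (_ : Bool) => gateFun (C i) y != v i)
          = fun _ _ => false := by
        funext y z; rw [hgi, hvi]; rfl
      rw [he]; simp [prEv]
    rw [hgi] at step1
    rw [hgi] at hzero
    linarith
  -- not
  · have hji : j < i := by have h := hC i; rw [hgi] at h; exact h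
    have hij : i ≠ j := (hji).ne'
    have hvi : v i = !v j := by have h := hv i; rw [hgi] at h; exact h
    have hEeq : (fun (y : Bool × Bool) (_ : Bool) => gateFun (C i) y != v i)
        = fun y _ => (y.1 != v j) := by
      funext y z; rw [hgi, hvi]
      cases hy : y.1 <;> cases hvj : v j <;> simp [gateFun, hy, hvj]
    rw [hgi] at step1
    rw [show (fun (y : Bool × Bool) (_ : Bool) => gateFun (Gate.not j) y != v i)
        = fun y _ => (y.1 != v j) from by rw [← hgi]; exact hEeq] at step1
    have hkey : prEv p i i (fun y (_ : Bool) => y.1 != v j) ≤ rej i j + δ j := by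
      apply key j
      intro y z ha hy
      have h2 : y.1 = z := by
        simp only [accept, agreeTest, hgi, if_neg hij, Bool.true_and,
          if_pos rfl, beq_iff_eq] at ha
        simpa using ha
      rw [← h2]; exact hy
    have hpair : rej i i + rej i j ≤ (N:ℝ)^2 * ε := by
      have hs := hsub {i, j}
      rwa [Finset.sum_pair hij] at hs
    have hIH := IH j hji
    have hp3 : (3:ℝ)^(j:ℕ)*3 ≤ 3^(i:ℕ) := by
      rw [← pow_succ]
      exact hpowmono _ _ (by have := Fin.lt_def.mp hji; omega)
    have h31 : (3:ℝ) ≤ 3^(i:ℕ) := by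
      have := hpowmono 1 (i:ℕ) (by have := Fin.lt_def.mp hji; omega)
      simpa using this
    have hfin : ((1:ℝ) + 3^(j:ℕ))/3^N ≤ 3^(i:ℕ)/3^N := by
      gcongr
      have h0 : (0:ℝ) ≤ 3^(i:ℕ) := by positivity
      linarith
    have hsplit : ((1:ℝ) + 3^(j:ℕ))/3^N = 1/3^N + 3^(j:ℕ)/3^N := by ring
    linarith
  -- and
  · have hj : j₁ < i ∧ j₂ < i := by have h := hC i; rw [hgi] at h; exact h
    have hij₁ : i ≠ j₁ := hj.1.ne'
    have hij₂ : i ≠ j₂ := hj.2.ne'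
    have hvi : v i = (v j₁ && v j₂) := by have h := hv i; rw [hgi] at h; exact h
    have hstep : prEv p i i (fun y (_ : Bool) => gateFun (Gate.and j₁ j₂) y != v i)
        ≤ prEv p i i (fun y (_ : Bool) => (y.1 != v j₁) || (y.2 != v j₂)) := by
      apply prEv_mono hp0
      intro y z hyz
      rw [hvi] at hyz
      obtain ⟨a, b⟩ := y
      revert hyz
      cases a <;> cases b <;> cases hv1 : v j₁ <;> cases hv2 : v j₂ <;>
        simp [gateFun]
    rw [hgi] at step1
    by_cases h12 : j₁ = j₂
    · subst h12
      have hkey : prEv p i i (fun y (_ : Bool) => (y.1 != v j₁) || (y.2 != v j₁))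
          ≤ rej i j₁ + δ j₁ := by
        apply key j₁
        intro y z ha hy
        have h2 : y.1 = z ∧ y.2 = z := by
          simp only [accept, agreeTest, hgi, if_neg hij₁, Bool.true_and,
            if_pos rfl, Bool.and_eq_true, beq_iff_eq] at ha
          exact ⟨by simpa using ha.1, by simpa using ha.2⟩
        rw [h2.1, h2.2] at hy
        simpa using hy
      have hpair : rej i i + rej i j₁ ≤ (N:ℝ)^2 * ε := by
        have hs := hsub {i, j₁}
        rwa [Finset.sum_pair hij₁] at hs
      have hIH := IH j₁ hj.1
      have hp3 : (3:ℝ)^(j₁:ℕ)*3 ≤ 3^(i:ℕ) := by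
        rw [← pow_succ]
        exact hpowmono _ _ (by have := Fin.lt_def.mp hj.1; omega)
      have h31 : (3:ℝ) ≤ 3^(i:ℕ) := by
        have := hpowmono 1 (i:ℕ) (by have := Fin.lt_def.mp hj.1; omega)
        simpa using this
      have hfin : ((1:ℝ) + 3^(j₁:ℕ))/3^N ≤ 3^(i:ℕ)/3^N := by
        gcongr
        have h0 : (0:ℝ) ≤ 3^(i:ℕ) := by positivity
        linarith
      have hsplit : ((1:ℝ) + 3^(j₁:ℕ))/3^N = 1/3^N + 3^(j₁:ℕ)/3^N := by ring
      linarith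
    · have hunion := prEv_union hp0 i i (fun y (_ : Bool) => (y.1 != v j₁))
        (fun y (_ : Bool) => (y.2 != v j₂))
      have hkey1 : prEv p i i (fun y (_ : Bool) => (y.1 != v j₁)) ≤ rej i j₁ + δ j₁ := by
        apply key j₁
        intro y z ha hy
        have h2 : y.1 = z := by
          simp only [accept, agreeTest, hgi, if_neg hij₁, Bool.true_and,
            if_pos rfl, if_neg h12, Bool.and_true, beq_iff_eq] at ha
          simpa using ha
        rw [← h2]; exact hy
      have hkey2 : prEv p i i (fun y (_ : Bool) => (y.2 != v j₂)) ≤ rej i j₂ + δ j₂ := by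
        apply key j₂
        intro y z ha hy
        have h2 : y.2 = z := by
          simp only [accept, agreeTest, hgi, if_neg hij₂, Bool.true_and,
            if_pos rfl, if_neg (Ne.symm h12), Bool.true_and, beq_iff_eq] at ha
          simpa using ha
        rw [← h2]; exact hy
      have htriple : rej i i + rej i j₁ + rej i j₂ ≤ (N:ℝ)^2 * ε := by
        have hs := hsub {i, j₁, j₂}
        rw [Finset.sum_insert (by simp [hij₁, hij₂]), Finset.sum_pair h12] at hs
        linarith
      have hIH1 := IH j₁ hj.1
      have hIH2 := IH j₂ hj.2
      have hp31 : (3:ℝ)^(j₁:ℕ)*3 ≤ 3^(i:ℕ) := by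
        rw [← pow_succ]
        exact hpowmono _ _ (by have := Fin.lt_def.mp hj.1; omega)
      have hp32 : (3:ℝ)^(j₂:ℕ)*3 ≤ 3^(i:ℕ) := by
        rw [← pow_succ]
        exact hpowmono _ _ (by have := Fin.lt_def.mp hj.2; omega)
      have h31 : (3:ℝ) ≤ 3^(i:ℕ) := by
        have := hpowmono 1 (i:ℕ) (by have := Fin.lt_def.mp hj.1; omega)
        simpa using this
      have hfin : ((1:ℝ) + 3^(j₁:ℕ) + 3^(j₂:ℕ))/3^N ≤ 3^(i:ℕ)/3^N := by
        gcongr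
        have h0 : (0:ℝ) ≤ 3^(i:ℕ) := by positivity
        linarith
      have hsplit : ((1:ℝ) + 3^(j₁:ℕ) + 3^(j₂:ℕ))/3^N
          = 1/3^N + 3^(j₁:ℕ)/3^N + 3^(j₂:ℕ)/3^N := by ring
      linarith
  -- or
  · have hj : j₁ < i ∧ j₂ < i := by have h := hC i; rw [hgi] at h; exact h
    have hij₁ : i ≠ j₁ := hj.1.ne'
    have hij₂ : i ≠ j₂ := hj.2.ne'
    have hvi : v i = (v j₁ || v j₂) := by have h := hv i; rw [hgi] at h; exact h
    have hstep : prEv p i i (fun y (_ : Bool) => gateFun (Gate.or j₁ j₂) y != v i)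
        ≤ prEv p i i (fun y (_ : Bool) => (y.1 != v j₁) || (y.2 != v j₂)) := by
      apply prEv_mono hp0
      intro y z hyz
      rw [hvi] at hyz
      obtain ⟨a, b⟩ := y
      revert hyz
      cases a <;> cases b <;> cases hv1 : v j₁ <;> cases hv2 : v j₂ <;>
        simp [gateFun]
    rw [hgi] at step1
    by_cases h12 : j₁ = j₂
    · subst h12
      have hkey : prEv p i i (fun y (_ : Bool) => (y.1 != v j₁) || (y.2 != v j₁))
          ≤ rej i j₁ + δ j₁ := by
        apply key j₁
        intro y z ha hy
        have h2 : y.1 = z ∧ y.2 = z := by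
          simp only [accept, agreeTest, hgi, if_neg hij₁, Bool.true_and,
            if_pos rfl, Bool.and_eq_true, beq_iff_eq] at ha
          exact ⟨by simpa using ha.1, by simpa using ha.2⟩
        rw [h2.1, h2.2] at hy
        simpa using hy
      have hpair : rej i i + rej i j₁ ≤ (N:ℝ)^2 * ε := by
        have hs := hsub {i, j₁}
        rwa [Finset.sum_pair hij₁] at hs
      have hIH := IH j₁ hj.1
      have hp3 : (3:ℝ)^(j₁:ℕ)*3 ≤ 3^(i:ℕ) := by
        rw [← pow_succ]
        exact hpowmono _ _ (by have := Fin.lt_def.mp hj.1; omega)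
      have h31 : (3:ℝ) ≤ 3^(i:ℕ) := by
        have := hpowmono 1 (i:ℕ) (by have := Fin.lt_def.mp hj.1; omega)
        simpa using this
      have hfin : ((1:ℝ) + 3^(j₁:ℕ))/3^N ≤ 3^(i:ℕ)/3^N := by
        gcongr
        have h0 : (0:ℝ) ≤ 3^(i:ℕ) := by positivity
        linarith
      have hsplit : ((1:ℝ) + 3^(j₁:ℕ))/3^N = 1/3^N + 3^(j₁:ℕ)/3^N := by ring
      linarith
    · have hunion := prEv_union hp0 i i (fun y (_ : Bool) => (y.1 != v j₁))
        (fun y (_ : Bool) => (y.2 != v j₂))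
      have hkey1 : prEv p i i (fun y (_ : Bool) => (y.1 != v j₁)) ≤ rej i j₁ + δ j₁ := by
        apply key j₁
        intro y z ha hy
        have h2 : y.1 = z := by
          simp only [accept, agreeTest, hgi, if_neg hij₁, Bool.true_and,
            if_pos rfl, if_neg h12, Bool.and_true, beq_iff_eq] at ha
          simpa using ha
        rw [← h2]; exact hy
      have hkey2 : prEv p i i (fun y (_ : Bool) => (y.2 != v j₂)) ≤ rej i j₂ + δ j₂ := by
        apply key j₂
        intro y z ha hy
        have h2 : y.2 = z := by
          simp only [accept, agreeTest, hgi, if_neg hij₂, Bool.true_and,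
            if_pos rfl, if_neg (Ne.symm h12), Bool.true_and, beq_iff_eq] at ha
          simpa using ha
        rw [← h2]; exact hy
      have htriple : rej i i + rej i j₁ + rej i j₂ ≤ (N:ℝ)^2 * ε := by
        have hs := hsub {i, j₁, j₂}
        rw [Finset.sum_insert (by simp [hij₁, hij₂]), Finset.sum_pair h12] at hs
        linarith
      have hIH1 := IH j₁ hj.1
      have hIH2 := IH j₂ hj.2
      have hp31 : (3:ℝ)^(j₁:ℕ)*3 ≤ 3^(i:ℕ) := by
        rw [← pow_succ]
        exact hpowmono _ _ (by have := Fin.lt_def.mp hj.1; omega)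
      have hp32 : (3:ℝ)^(j₂:ℕ)*3 ≤ 3^(i:ℕ) := by
        rw [← pow_succ]
        exact hpowmono _ _ (by have := Fin.lt_def.mp hj.2; omega)
      have h31 : (3:ℝ) ≤ 3^(i:ℕ) := by
        have := hpowmono 1 (i:ℕ) (by have := Fin.lt_def.mp hj.1; omega)
        simpa using this
      have hfin : ((1:ℝ) + 3^(j₁:ℕ) + 3^(j₂:ℕ))/3^N ≤ 3^(i:ℕ)/3^N := by
        gcongr
        have h0 : (0:ℝ) ≤ 3^(i:ℕ) := by positivity
        linarith
      have hsplit : ((1:ℝ) + 3^(j₁:ℕ) + 3^(j₂:ℕ))/3^N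
          = 1/3^N + 3^(j₁:ℕ)/3^N + 3^(j₂:ℕ)/3^N := by ring
      linarith
end

section
/- Let h ≥ 1 and consider the strategy on question sets S = T = {0,1,…,2h+1} where, for Bob's question t with ⌊t/2⌋ = i, Bob answers 1 with probability 2^{-(h−i)} and 0 otherwise, and for Alice's question s with ⌊s/2⌋ = i ≥ 1, Alice answers (1,0) and (0,1) each with probability 2^{-(h−i+1)} and (0,0) with probability 1 − 2^{-(h−i)}, with joint distributions as specified in the paper (perfectly correlated/anticorrelated on the relevant question pairs, independent otherwise). Then this strategy satisfies the no-signaling conditions. -/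
/-- Alice's marginal distribution: on question `s` with `i = ⌊s/2⌋ ≥ 1` she answers
`(1,0)` and `(0,1)` each with probability `2^{-(h-i+1)}` and `(0,0)` with probability
`1 − 2^{-(h-i)}`; on `i = 0` she answers `(0,0)`. -/
noncomputable def qA (h s : ℕ) (y : Bool × Bool) : ℝ :=
  let i := s / 2
  if i = 0 then (if y = (false, false) then 1 else 0)
  else if y = (true, false) ∨ y = (false, true) then (1 / 2 : ℝ) ^ (h - i + 1)
  else if y = (false, false) then 1 - (1 / 2 : ℝ) ^ (h - i)
  else 0

/-- Bob's marginal distribution: on question `t` with `i = ⌊t/2⌋` he answers `1` with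
probability `2^{-(h-i)}` and `0` otherwise. -/
noncomputable def qB (h t : ℕ) (z : Bool) : ℝ :=
  let i := t / 2
  if z then (1 / 2 : ℝ) ^ (h - i) else 1 - (1 / 2 : ℝ) ^ (h - i)

/-- Correlated joint distribution where Alice answers `(1,0)`, `(0,1)`, `(0,0)` with
probabilities `2^{-(h-i+1)}`, `2^{-(h-i+1)}`, `1 − 2^{-(h-i)}`, and Bob answers `a`
when Alice answers `(1,0)`, `b` when `(0,1)`, and `0` when `(0,0)`. -/
noncomputable def corr (h i : ℕ) (a b : Bool) (y : Bool × Bool) (z : Bool) : ℝ :=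
  if y = (true, false) ∧ z = a then (1 / 2 : ℝ) ^ (h - i + 1)
  else if y = (false, true) ∧ z = b then (1 / 2 : ℝ) ^ (h - i + 1)
  else if y = (false, false) ∧ z = false then 1 - (1 / 2 : ℝ) ^ (h - i)
  else 0

/-- The cheating strategy of the tightness construction: perfectly correlated on `s = t`,
correlated/anticorrelated on the question pairs where `g_t` is an input of `g_s`, and
independent (product of the marginals) otherwise. -/
noncomputable def cheat (h s t : ℕ) (y : Bool × Bool) (z : Bool) : ℝ :=
  let i := s / 2
  if 1 ≤ i ∧ s = t then corr h i true true y z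
  else if 1 ≤ i ∧ t = 2 * (i - 1) then corr h i true false y z
  else if 1 ≤ i ∧ t = 2 * (i - 1) + 1 then corr h i false true y z
  else qA h s y * qB h t z

open Finset

lemma qB_sum (h t : ℕ) : ∑ z : Bool, qB h t z = 1 := by
  simp [qB, Fintype.sum_bool]

lemma qA_sum (h s : ℕ) : ∑ y : Bool × Bool, qA h s y = 1 := by
  rcases Nat.eq_zero_or_pos (s/2) with hi | hi
  · simp [qA, hi, Fintype.sum_prod_type, Fintype.sum_bool]
  · have h0 : s / 2 ≠ 0 := by omega
    simp [qA, h0, Fintype.sum_prod_type, Fintype.sum_bool]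
    rw [pow_succ]
    ring

lemma corr_sumZ (h i : ℕ) (a b : Bool) (y : Bool × Bool) :
    ∑ z : Bool, corr h i a b y z =
      if y = (true, false) ∨ y = (false, true) then (1 / 2 : ℝ) ^ (h - i + 1)
      else if y = (false, false) then 1 - (1 / 2 : ℝ) ^ (h - i) else 0 := by
  obtain ⟨y1, y2⟩ := y
  cases y1 <;> cases y2 <;> cases a <;> cases b <;>
    simp [corr, Fintype.sum_bool]

lemma cheat_sumZ (h s t : ℕ) (y : Bool × Bool) :
    ∑ z : Bool, cheat h s t y z = qA h s y := by
  unfold cheat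
  dsimp only
  split_ifs with h1 h2 h3
  · rw [corr_sumZ]; unfold qA; dsimp only; rw [if_neg (by omega : ¬ s / 2 = 0)]
  · rw [corr_sumZ]; unfold qA; dsimp only; rw [if_neg (by omega : ¬ s / 2 = 0)]
  · rw [corr_sumZ]; unfold qA; dsimp only; rw [if_neg (by omega : ¬ s / 2 = 0)]
  · rw [← Finset.mul_sum, qB_sum, mul_one]

lemma corr_sumY (h i : ℕ) (a b : Bool) (z : Bool) :
    ∑ y : Bool × Bool, corr h i a b y z =
      (if z = a then (1 / 2 : ℝ) ^ (h - i + 1) else 0) +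
      (if z = b then (1 / 2 : ℝ) ^ (h - i + 1) else 0) +
      (if z = false then 1 - (1 / 2 : ℝ) ^ (h - i) else 0) := by
  cases a <;> cases b <;> cases z <;>
    simp [corr, Fintype.sum_prod_type, Fintype.sum_bool] <;> ring

lemma cheat_sumY (h s t : ℕ) (hs : s < 2 * h + 2) (z : Bool) :
    ∑ y : Bool × Bool, cheat h s t y z = qB h t z := by
  have hi : s / 2 ≤ h := by omega
  unfold cheat
  dsimp only
  split_ifs with h1 h2 h3
  · obtain ⟨hi1, hst⟩ := h1
    subst hst
    rw [corr_sumY]; unfold qB; dsimp only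
    cases z
    · simp
    · simp; rw [pow_succ]; ring
  · obtain ⟨hi1, ht⟩ := h2
    subst ht
    rw [corr_sumY]; unfold qB; dsimp only
    have h2' : 2 * (s / 2 - 1) / 2 = s / 2 - 1 := by omega
    have he : h - (s / 2 - 1) = h - s / 2 + 1 := by omega
    rw [h2', he]
    cases z <;> simp <;> ring
  · obtain ⟨hi1, ht⟩ := h3
    subst ht
    rw [corr_sumY]; unfold qB; dsimp only
    have h2' : (2 * (s / 2 - 1) + 1) / 2 = s / 2 - 1 := by omega
    have he : h - (s / 2 - 1) = h - s / 2 + 1 := by omega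
    rw [h2', he]
    cases z <;> simp <;> ring
  · rw [← Finset.sum_mul, qA_sum, one_mul]


open Finset in
/-- The cheating strategy on question sets `S = T = {0,…,2h+1}` satisfies the
no-signaling conditions. -/
theorem stmt11 (h : ℕ) (hh : 1 ≤ h) :
    (∀ s s' t, s < 2 * h + 2 → s' < 2 * h + 2 → t < 2 * h + 2 →
      ∀ z, ∑ y : Bool × Bool, cheat h s t y z = ∑ y : Bool × Bool, cheat h s' t y z) ∧
    (∀ s t t', s < 2 * h + 2 → t < 2 * h + 2 → t' < 2 * h + 2 →
      ∀ y, ∑ z : Bool, cheat h s t y z = ∑ z : Bool, cheat h s t' y z) := by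
  constructor
  · intro s s' t hs hs' ht z
    rw [cheat_sumY h s t hs z, cheat_sumY h s' t hs' z]
  · intro s t t' hs ht ht' y
    rw [cheat_sumZ, cheat_sumZ]
end

section
/- Let p be a δ-no-signaling strategy with respect to a probability distribution π on S × T, witnessed by single-player strategies pᴬ and pᴮ. Then there exists a genuinely no-signaling strategy p̂ such that Σ_{s,t} π(s,t)·(1/2)·Σ_{y,z} |p(y,z|s,t) − p̂(y,z|s,t)| ≤ 2δ. -/
open Finset

lemma nsstep {Y Z : Type*} [Fintype Y] [Fintype Z] (q : Y → Z → ℝ)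
    (hq0 : ∀ y z, 0 ≤ q y z) (α : Y → ℝ) (hα0 : ∀ y, 0 ≤ α y)
    (hsum : ∑ y, ∑ z, q y z = ∑ y, α y) :
    ∃ q1 : Y → Z → ℝ, (∀ y z, 0 ≤ q1 y z) ∧ (∀ y, ∑ z, q1 y z = α y) ∧
      (∀ z, ∑ y, q1 y z = ∑ y, q y z) ∧
      ∑ y, ∑ z, |q y z - q1 y z| ≤ ∑ y, |(∑ z, q y z) - α y| := by
  classical
  set m : Y → ℝ := fun y => ∑ z, q y z with hm
  have hm0 : ∀ y, 0 ≤ m y := fun y => Finset.sum_nonneg fun z _ => hq0 y z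
  have hmq : ∀ y, m y = 0 → ∀ z, q y z = 0 := by
    intro y hy z
    exact (Finset.sum_eq_zero_iff_of_nonneg (fun z _ => hq0 y z)).1 hy z (mem_univ z)
  set E : ℝ := ∑ y, max (m y - α y) 0 with hE
  have hE0 : 0 ≤ E := Finset.sum_nonneg fun y _ => le_max_right _ _
  have hsum' : ∑ y, (m y - α y) = 0 := by
    rw [Finset.sum_sub_distrib]
    simp only [hm]
    rw [hsum]; ring
  have hED : ∑ y, max (α y - m y) 0 = E := by
    have h : ∀ y, max (α y - m y) 0 = max (m y - α y) 0 - (m y - α y) := by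
      intro y; rcases le_total (m y) (α y) with h | h
      · rw [max_eq_left (by linarith), max_eq_right (by linarith)]; ring
      · rw [max_eq_right (by linarith), max_eq_left (by linarith)]; ring
    rw [Finset.sum_congr rfl fun y _ => h y, Finset.sum_sub_distrib, hsum', hE]; ring
  rcases eq_or_lt_of_le hE0 with hEz | hEpos
  · -- E = 0 : then m = α and q itself works
    have hma : ∀ y, m y = α y := by
      have h1 : ∀ y ∈ (univ : Finset Y), max (α y - m y) 0 = 0 := by
        rw [← hED] at hEz
        exact (Finset.sum_eq_zero_iff_of_nonneg (fun y _ => le_max_right _ _)).1 hEz.symm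
      have h2 : ∀ y ∈ (univ : Finset Y), max (m y - α y) 0 = 0 :=
        (Finset.sum_eq_zero_iff_of_nonneg (fun y _ => le_max_right _ _)).1 hEz.symm
      intro y
      have := h1 y (mem_univ y); have := h2 y (mem_univ y)
      have hle : α y - m y ≤ 0 := by
        by_contra hc; push_neg at hc
        rw [max_eq_left (le_of_lt hc)] at *; linarith [h1 y (mem_univ y)]
      have hge : m y - α y ≤ 0 := by
        by_contra hc; push_neg at hc
        have := h2 y (mem_univ y)
        rw [max_eq_left (le_of_lt hc)] at this; linarith
      linarith
    exact ⟨q, hq0, fun y => hma y, fun z => rfl, by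
      apply Finset.sum_le_sum; intro y _
      simp only [sub_self, abs_zero, Finset.sum_const_zero]
      exact abs_nonneg _⟩
  · -- E > 0
    set e : Z → ℝ := fun z => (∑ y, (max (m y - α y) 0 / m y) * q y z) / E with he
    have hterm0 : ∀ y z, 0 ≤ (max (m y - α y) 0 / m y) * q y z := fun y z =>
      mul_nonneg (div_nonneg (le_max_right _ _) (hm0 y)) (hq0 y z)
    have he0 : ∀ z, 0 ≤ e z := fun z =>
      div_nonneg (Finset.sum_nonneg fun y _ => hterm0 y z) hE0
    have hterm_sum : ∀ y, ∑ z, (max (m y - α y) 0 / m y) * q y z = max (m y - α y) 0 := by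
      intro y
      rw [← Finset.mul_sum]
      rcases eq_or_lt_of_le (hm0 y) with h0 | hpos
      · have : max (m y - α y) 0 = 0 := by
          rw [max_eq_right]; nlinarith [hα0 y]
        rw [this]; simp
      · rw [show (∑ i : Z, q y i) = m y from rfl, div_mul_eq_mul_div, mul_div_assoc,
          div_self hpos.ne', mul_one]
    have hesum : ∑ z, e z = 1 := by
      rw [he]
      simp only
      rw [← Finset.sum_div, Finset.sum_comm]
      rw [Finset.sum_congr rfl fun y _ => hterm_sum y]
      rw [← hE, div_self (ne_of_gt hEpos)]
    set q1 : Y → Z → ℝ := fun y z => (min (α y) (m y) / m y) * q y z + max (α y - m y) 0 * e z with hq1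
    have hq10 : ∀ y z, 0 ≤ q1 y z := by
      intro y z
      apply add_nonneg
      · exact mul_nonneg (div_nonneg (le_min (hα0 y) (hm0 y)) (hm0 y)) (hq0 y z)
      · exact mul_nonneg (le_max_right _ _) (he0 z)
    have hq1A : ∀ y, ∑ z, q1 y z = α y := by
      intro y
      simp only [hq1]
      rw [Finset.sum_add_distrib, ← Finset.mul_sum, ← Finset.mul_sum, hesum, mul_one,
        show (∑ i : Z, q y i) = m y from rfl]
      rcases eq_or_lt_of_le (hm0 y) with h0 | hpos
      · rw [← h0, min_eq_right (hα0 y), max_eq_left (by simpa using hα0 y)]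
        simp
      · rw [div_mul_cancel₀ _ (ne_of_gt hpos)]
        rcases le_total (α y) (m y) with h | h
        · rw [min_eq_left h, max_eq_right (by linarith : α y - m y ≤ 0)]; ring
        · rw [min_eq_right h, max_eq_left (by linarith : (0:ℝ) ≤ α y - m y)]; linarith
    have hEe : ∀ z, E * e z = ∑ y, (max (m y - α y) 0 / m y) * q y z := by
      intro z; rw [he]; field_simp
    have hq1Z : ∀ z, ∑ y, q1 y z = ∑ y, q y z := by
      intro z
      simp only [hq1]
      rw [Finset.sum_add_distrib, ← Finset.sum_mul, hED, hEe]
      rw [← Finset.sum_add_distrib]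
      apply Finset.sum_congr rfl
      intro y _
      rcases eq_or_lt_of_le (hm0 y) with h0 | hpos
      · rw [hmq y h0.symm z]; simp [← h0]
      · have : min (α y) (m y) / m y * q y z + max (m y - α y) 0 / m y * q y z
            = ((min (α y) (m y) + max (m y - α y) 0) / m y) * q y z := by ring
        rw [this]
        have hmm : min (α y) (m y) + max (m y - α y) 0 = m y := by
          rcases le_total (α y) (m y) with h | h
          · rw [min_eq_left h, max_eq_left (by linarith)]; ring
          · rw [min_eq_right h, max_eq_right (by linarith)]; ring
        rw [hmm, div_self (ne_of_gt hpos), one_mul]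
    have hq1d : ∑ y, ∑ z, |q y z - q1 y z| ≤ ∑ y, |m y - α y| := by
      apply Finset.sum_le_sum
      intro y _
      have key : ∀ z, |q y z - q1 y z| ≤ (max (m y - α y) 0 / m y) * q y z + max (α y - m y) 0 * e z := by
        intro z
        rcases eq_or_lt_of_le (hm0 y) with h0 | hpos
        · have hq := hmq y h0.symm z
          have h1 : q1 y z = max (α y - m y) 0 * e z := by
            simp only [hq1, hq, mul_zero, zero_add]
          rw [hq, h1, zero_sub, abs_neg,
            abs_of_nonneg (mul_nonneg (le_max_right _ _) (he0 z)), mul_zero, zero_add]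
        · have hdiff : q y z - q1 y z = (max (m y - α y) 0 / m y) * q y z - max (α y - m y) 0 * e z := by
            simp only [hq1]
            have hne := hpos.ne'
            rcases le_total (α y) (m y) with h | h
            · rw [min_eq_left h,
                show max (α y - m y) 0 = 0 from max_eq_right (by linarith),
                show max (m y - α y) 0 = m y - α y from max_eq_left (by linarith)]
              field_simp
              ring
            · rw [min_eq_right h,
                show max (m y - α y) 0 = 0 from max_eq_right (by linarith),
                show max (α y - m y) 0 = α y - m y from max_eq_left (by linarith),
                div_self hne]
              ring
          rw [hdiff]
          have hu : 0 ≤ (max (m y - α y) 0 / m y) * q y z := hterm0 y z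
          have hv : 0 ≤ max (α y - m y) 0 * e z := mul_nonneg (le_max_right _ _) (he0 z)
          rw [abs_le]; constructor <;> linarith
      calc ∑ z, |q y z - q1 y z|
          ≤ ∑ z, ((max (m y - α y) 0 / m y) * q y z + max (α y - m y) 0 * e z) :=
            Finset.sum_le_sum fun z _ => key z
        _ = max (m y - α y) 0 + max (α y - m y) 0 := by
            rw [Finset.sum_add_distrib, hterm_sum y, ← Finset.mul_sum, hesum, mul_one]
        _ = |m y - α y| := by
            rcases le_total (α y) (m y) with h | h
            · rw [show max (m y - α y) 0 = m y - α y from max_eq_left (by linarith),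
                show max (α y - m y) 0 = 0 from max_eq_right (by linarith),
                abs_of_nonneg (by linarith)]; ring
            · rw [show max (m y - α y) 0 = 0 from max_eq_right (by linarith),
                show max (α y - m y) 0 = α y - m y from max_eq_left (by linarith),
                abs_of_nonpos (by linarith)]; ring
    exact ⟨q1, hq10, hq1A, hq1Z, by
      calc ∑ y, ∑ z, |q y z - q1 y z| ≤ ∑ y, |m y - α y| := hq1d
        _ = ∑ y, |(∑ z, q y z) - α y| := rfl⟩

open Finset in
/-- Holenstein's rounding lemma: a `δ`-no-signaling strategy `p` with respect to a
distribution `π`, witnessed by single-player strategies `pᴬ` and `pᴮ`, is within average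
total variation distance `2δ` of a genuinely no-signaling strategy `p̂`. -/
theorem stmt13 {S T Y Z : Type*} [Fintype S] [Fintype T] [Fintype Y] [Fintype Z]
    (π : S → T → ℝ) (hπ0 : ∀ s t, 0 ≤ π s t) (hπ1 : ∑ s, ∑ t, π s t = 1)
    (p : S → T → Y → Z → ℝ)
    (hp0 : ∀ s t y z, 0 ≤ p s t y z)
    (hp1 : ∀ s t, ∑ y, ∑ z, p s t y z = 1)
    (pA : S → Y → ℝ) (hpA0 : ∀ s y, 0 ≤ pA s y) (hpA1 : ∀ s, ∑ y, pA s y = 1)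
    (pB : T → Z → ℝ) (hpB0 : ∀ t z, 0 ≤ pB t z) (hpB1 : ∀ t, ∑ z, pB t z = 1)
    (δ : ℝ)
    (hA : ∑ s, ∑ t, π s t * ((1 / 2) * ∑ y, |(∑ z, p s t y z) - pA s y|) ≤ δ)
    (hB : ∑ s, ∑ t, π s t * ((1 / 2) * ∑ z, |(∑ y, p s t y z) - pB t z|) ≤ δ) :
    ∃ phat : S → T → Y → Z → ℝ,
      (∀ s t y z, 0 ≤ phat s t y z) ∧
      (∀ s t, ∑ y, ∑ z, phat s t y z = 1) ∧
      (∀ s s' t z, ∑ y, phat s t y z = ∑ y, phat s' t y z) ∧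
      (∀ s t t' y, ∑ z, phat s t y z = ∑ z, phat s t' y z) ∧
      ∑ s, ∑ t, π s t * ((1 / 2) * ∑ y, ∑ z, |p s t y z - phat s t y z|) ≤ 2 * δ := by
  classical
  -- Step 1: fix the Y-marginal to pA, preserving the Z-marginal
  have h1 : ∀ s t, ∃ q1 : Y → Z → ℝ, (∀ y z, 0 ≤ q1 y z) ∧ (∀ y, ∑ z, q1 y z = pA s y) ∧
      (∀ z, ∑ y, q1 y z = ∑ y, p s t y z) ∧
      ∑ y, ∑ z, |p s t y z - q1 y z| ≤ ∑ y, |(∑ z, p s t y z) - pA s y| := by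
    intro s t
    exact nsstep (p s t) (hp0 s t) (pA s) (hpA0 s) (by rw [hp1 s t, hpA1 s])
  choose q1 hq10 hq1A hq1Z hq1d using h1
  -- Step 2: fix the Z-marginal to pB, preserving the Y-marginal pA
  have h2 : ∀ s t, ∃ q2 : Z → Y → ℝ, (∀ z y, 0 ≤ q2 z y) ∧ (∀ z, ∑ y, q2 z y = pB t z) ∧
      (∀ y, ∑ z, q2 z y = ∑ z, q1 s t y z) ∧
      ∑ z, ∑ y, |q1 s t y z - q2 z y| ≤ ∑ z, |(∑ y, q1 s t y z) - pB t z| := by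
    intro s t
    exact nsstep (fun z y => q1 s t y z) (fun z y => hq10 s t y z) (pB t) (hpB0 t)
      (by
        rw [Finset.sum_comm]
        have : ∀ y ∈ (univ : Finset Y), ∑ z, q1 s t y z = pA s y := fun y _ => hq1A s t y
        rw [Finset.sum_congr rfl this, hpA1 s, hpB1 t])
  choose q2 hq20 hq2B hq2A hq2d using h2
  refine ⟨fun s t y z => q2 s t z y, fun s t y z => hq20 s t z y, ?_, ?_, ?_, ?_⟩
  · intro s t
    calc ∑ y, ∑ z, q2 s t z y = ∑ y, ∑ z, q1 s t y z := by
          exact Finset.sum_congr rfl fun y _ => hq2A s t y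
      _ = ∑ y, pA s y := Finset.sum_congr rfl fun y _ => hq1A s t y
      _ = 1 := hpA1 s
  · intro s s' t z
    have h : ∀ s, ∑ y, q2 s t z y = pB t z := fun s => hq2B s t z
    rw [h s, h s']
  · intro s t t' y
    have h : ∀ t, ∑ z, q2 s t z y = pA s y := by
      intro t; rw [hq2A s t y, hq1A s t y]
    rw [h t, h t']
  · -- distance bound
    have key : ∀ s t, (1 / 2 : ℝ) * ∑ y, ∑ z, |p s t y z - q2 s t z y| ≤
        (1 / 2) * ∑ y, |(∑ z, p s t y z) - pA s y| +
        (1 / 2) * ∑ z, |(∑ y, p s t y z) - pB t z| := by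
      intro s t
      have tri : ∑ y, ∑ z, |p s t y z - q2 s t z y| ≤
          (∑ y, ∑ z, |p s t y z - q1 s t y z|) + ∑ y, ∑ z, |q1 s t y z - q2 s t z y| := by
        rw [← Finset.sum_add_distrib]
        apply Finset.sum_le_sum; intro y _
        rw [← Finset.sum_add_distrib]
        apply Finset.sum_le_sum; intro z _
        calc |p s t y z - q2 s t z y|
            = |(p s t y z - q1 s t y z) + (q1 s t y z - q2 s t z y)| := by ring_nf
          _ ≤ _ := abs_add_le _ _
      have h2d : ∑ y, ∑ z, |q1 s t y z - q2 s t z y| ≤ ∑ z, |(∑ y, p s t y z) - pB t z| := by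
        rw [Finset.sum_comm]
        calc ∑ z, ∑ y, |q1 s t y z - q2 s t z y| ≤ ∑ z, |(∑ y, q1 s t y z) - pB t z| :=
              hq2d s t
          _ = ∑ z, |(∑ y, p s t y z) - pB t z| :=
              Finset.sum_congr rfl fun z _ => by rw [hq1Z s t z]
      have := hq1d s t
      linarith
    calc ∑ s, ∑ t, π s t * ((1 / 2) * ∑ y, ∑ z, |p s t y z - q2 s t z y|)
        ≤ ∑ s, ∑ t, π s t * ((1 / 2) * ∑ y, |(∑ z, p s t y z) - pA s y| +
            (1 / 2) * ∑ z, |(∑ y, p s t y z) - pB t z|) := by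
          apply Finset.sum_le_sum; intro s _
          apply Finset.sum_le_sum; intro t _
          exact mul_le_mul_of_nonneg_left (key s t) (hπ0 s t)
      _ = (∑ s, ∑ t, π s t * ((1 / 2) * ∑ y, |(∑ z, p s t y z) - pA s y|)) +
            ∑ s, ∑ t, π s t * ((1 / 2) * ∑ z, |(∑ y, p s t y z) - pB t z|) := by
          rw [← Finset.sum_add_distrib]
          apply Finset.sum_congr rfl; intro s _
          rw [← Finset.sum_add_distrib]
          apply Finset.sum_congr rfl; intro t _
          ring
      _ ≤ 2 * δ := by linarith
end
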